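/- The minimum distance of the Reed-Muller code RM(r,m) is 2^{m-r}: every nonzero multilinear polynomial of degree ≤ r in m variables over F_2 has at least 2^{m-r} nonzero evaluations on F_2^m. -/

import Mathlib

/-!
Plotkin's `(u | u + v)` recursion. A multilinear `p` in `x₀, …, xₙ` is `q + x₀ s` with `q`, `s`
multilinear in `x₁, …, xₙ`, `deg q ≤ r` and `deg s ≤ r - 1`, so its evaluation vector is the
concatenation of those of `q` and `q + s`. If `s = 0` this doubles the weight of `q`; otherwise
the triangle inequality bounds the weights of `q` and `q + s` together below by the weight of
`s`. Induction on the number of variables then gives `2 ^ (m - r)`.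
-/

theorem hammingNorm_le_hammingNorm_add_hammingNorm_add {ι : Type*} [Fintype ι] {β : ι → Type*}
    [∀ i, AddGroup (β i)] [∀ i, DecidableEq (β i)] (x y : ∀ i, β i) :
    hammingNorm y ≤ hammingNorm x + hammingNorm (x + y) := by
  calc hammingNorm y = hammingDist x (x + y) := by
        rw [hammingDist_eq_hammingNorm, neg_add_cancel_left]
    _ ≤ hammingDist x 0 + hammingDist 0 (x + y) := hammingDist_triangle _ _ _
    _ = hammingNorm x + hammingNorm (x + y) := by
        rw [hammingDist_zero_right, hammingDist_zero_left]

theorem hammingNorm_eq_sum_cons {n : ℕ} {α β : Type*} [Fintype α] [Zero β] [DecidableEq β]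
    (f : (Fin (n + 1) → α) → β) :
    hammingNorm f = ∑ a, hammingNorm fun x => f (Fin.cons a x) := by
  simp only [hammingNorm, Finset.card_filter]
  rw [← (Fin.consEquiv fun _ => α).sum_comp, Fintype.sum_prod_type]
  rfl

namespace MvPolynomial

theorem coeff_finSuccEquiv_mem_restrictDegree {R : Type*} [CommSemiring R] {n k : ℕ}
    {p : MvPolynomial (Fin (n + 1)) R} (hp : p ∈ restrictDegree (Fin (n + 1)) R k) (i : ℕ) :
    (finSuccEquiv R n p).coeff i ∈ restrictDegree (Fin n) R k := by
  rw [mem_restrictDegree] at hp ⊢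
  intro d hd j
  simpa using hp _ (mem_support_coeff_finSuccEquiv.mp hd) j.succ

theorem natDegree_finSuccEquiv_le_of_mem_restrictDegree {R : Type*} [CommSemiring R] {n k : ℕ}
    {p : MvPolynomial (Fin (n + 1)) R} (hp : p ∈ restrictDegree (Fin (n + 1)) R k) :
    (finSuccEquiv R n p).natDegree ≤ k := by
  rw [natDegree_finSuccEquiv, degreeOf_le_iff]
  exact fun d hd => (mem_restrictDegree _ _ _).mp hp d hd 0

theorem eval_cons_of_mem_restrictDegree_one {R : Type*} [CommSemiring R] {n : ℕ}
    {p : MvPolynomial (Fin (n + 1)) R} (hp : p ∈ restrictDegree (Fin (n + 1)) R 1)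
    (y : R) (x : Fin n → R) :
    eval (Fin.cons y x) p =
      eval x ((finSuccEquiv R n p).coeff 0) + y * eval x ((finSuccEquiv R n p).coeff 1) := by
  rw [eval_eq_eval_mv_eval']
  conv_lhs => rw [Polynomial.eq_X_add_C_of_natDegree_le_one
    (natDegree_finSuccEquiv_le_of_mem_restrictDegree hp)]
  rw [Polynomial.map_add, Polynomial.map_mul, Polynomial.map_C, Polynomial.map_C,
    Polynomial.map_X, Polynomial.eval_add, Polynomial.eval_mul, Polynomial.eval_C,
    Polynomial.eval_C, Polynomial.eval_X, mul_comm, add_comm]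

theorem hammingNorm_eval_eq_of_mem_restrictDegree_one {n : ℕ}
    {p : MvPolynomial (Fin (n + 1)) (ZMod 2)} (hp : p ∈ restrictDegree (Fin (n + 1)) (ZMod 2) 1) :
    (hammingNorm fun x => eval x p) =
      (hammingNorm fun x => eval x ((finSuccEquiv _ n p).coeff 0)) +
        hammingNorm fun x =>
          eval x ((finSuccEquiv _ n p).coeff 0 + (finSuccEquiv _ n p).coeff 1) := by
  rw [hammingNorm_eq_sum_cons, show (Finset.univ : Finset (ZMod 2)) = {0, 1} from rfl,
    Finset.sum_pair zero_ne_one]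
  simp only [eval_cons_of_mem_restrictDegree_one hp, map_add, zero_mul, add_zero, one_mul]

theorem pow_sub_le_hammingNorm_eval_of_mem_restrictDegree_one {n r : ℕ}
    {p : MvPolynomial (Fin n) (ZMod 2)} (hp : p ∈ restrictDegree (Fin n) (ZMod 2) 1)
    (hp₀ : p ≠ 0) (hdeg : p.totalDegree ≤ r) :
    2 ^ (n - r) ≤ hammingNorm fun x => eval x p := by
  induction n generalizing r with
  | zero =>
    obtain ⟨c, rfl⟩ : ∃ c, p = C c := ⟨_, p.eq_C_of_isEmpty⟩
    rw [Nat.zero_sub, pow_zero, Nat.one_le_iff_ne_zero, hammingNorm_ne_zero_iff]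
    exact Function.ne_iff.mpr ⟨default, by simpa using hp₀⟩
  | succ n ih =>
    rw [hammingNorm_eval_eq_of_mem_restrictDegree_one hp]
    set q := (finSuccEquiv _ n p).coeff 0
    set s := (finSuccEquiv _ n p).coeff 1
    have hq : q ∈ restrictDegree (Fin n) (ZMod 2) 1 := coeff_finSuccEquiv_mem_restrictDegree hp 0
    have hs : s ∈ restrictDegree (Fin n) (ZMod 2) 1 := coeff_finSuccEquiv_mem_restrictDegree hp 1
    by_cases hs₀ : s = 0
    · have hq₀ : q ≠ 0 := by
        intro hq₀
        have hP : finSuccEquiv _ n p = Polynomial.C s * Polynomial.X + Polynomial.C q :=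
          Polynomial.eq_X_add_C_of_natDegree_le_one
            (natDegree_finSuccEquiv_le_of_mem_restrictDegree hp)
        rw [hs₀, hq₀, map_zero, zero_mul, zero_add, EmbeddingLike.map_eq_zero_iff] at hP
        exact hp₀ hP
      have hqdeg : q.totalDegree ≤ r := by
        simpa using (totalDegree_coeff_finSuccEquiv_add_le p 0 hq₀).trans hdeg
      rw [hs₀, add_zero]
      calc 2 ^ (n + 1 - r) ≤ 2 ^ (n - r) + 2 ^ (n - r) := by
            rw [← two_mul, ← pow_succ']; exact Nat.pow_le_pow_right two_pos (by omega)
        _ ≤ _ := Nat.add_le_add (ih hq hq₀ hqdeg) (ih hq hq₀ hqdeg)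
    · have hsdeg : s.totalDegree + 1 ≤ p.totalDegree :=
        totalDegree_coeff_finSuccEquiv_add_le p 1 hs₀
      calc 2 ^ (n + 1 - r) = 2 ^ (n - (r - 1)) := by congr 1; omega
        _ ≤ hammingNorm fun x => eval x s := ih hs hs₀ (by omega)
        _ ≤ _ := by
          simpa only [map_add, Pi.add_def] using hammingNorm_le_hammingNorm_add_hammingNorm_add
            (fun x => eval x q) (fun x => eval x s)

end MvPolynomial

theorem reed_muller_min_distance_general (m r : ℕ)
    (p : MvPolynomial (Fin m) (ZMod 2)) (hp : p ≠ 0)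
    (hml : ∀ d ∈ p.support, ∀ i, d i ≤ 1)
    (hdeg : p.totalDegree ≤ r) :
    2 ^ (m - r) ≤ Nat.card {x : Fin m → ZMod 2 // MvPolynomial.eval x p ≠ 0} := by
  rw [Nat.card_eq_fintype_card, Fintype.card_subtype]
  exact MvPolynomial.pow_sub_le_hammingNorm_eval_of_mem_restrictDegree_one
    ((MvPolynomial.mem_restrictDegree _ _ _).mpr hml) hp hdeg

/-- Minimum distance of the Reed–Muller code RM(r,m): every nonzero multilinear
polynomial of degree ≤ r in m variables over F₂ has at least 2^{m-r} nonzero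
evaluations on F₂^m. -/
theorem reed_muller_min_distance (m r : ℕ) (hr : r ≤ m)
    (p : MvPolynomial (Fin m) (ZMod 2)) (hp : p ≠ 0)
    (hml : ∀ d ∈ p.support, ∀ i, d i ≤ 1)
    (hdeg : p.totalDegree ≤ r) :
    2 ^ (m - r) ≤ Nat.card {x : Fin m → ZMod 2 // MvPolynomial.eval x p ≠ 0} :=
  reed_muller_min_distance_general m r p hp hml hdeg
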